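/- (Jacobi inversion formula) For α, β real with α+β+1 > 0 and integers 0 ≤ j ≤ i: Σ_{k=j}^{i} [(α+β+2k+1) / (α+β+k+j+1)_{i-j+1}] · P_{i-k}^{(-α-i-1,-β-i-1)}(x) · P_{k-j}^{(α+j,β+j)}(x) = δ_{ij}. -/
import Mathlib


open Finset Real

/-- Pochhammer symbol (rising factorial) `(a)_k`. -/
noncomputable def poch (a : ℝ) (k : ℕ) : ℝ := (ascPochhammer ℝ k).eval a

/-- Classical Laguerre polynomial `L_n^{(α)}(x)` for arbitrary parameter α. -/
noncomputable def lag (α : ℝ) (n : ℕ) (x : ℝ) : ℝ :=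
  ∑ k ∈ Finset.range (n + 1),
    (-1 : ℝ) ^ k * (poch (α + k + 1) (n - k) / (Nat.factorial (n - k))) *
      x ^ k / (Nat.factorial k)

/-- Classical Jacobi polynomial `P_n^{(α,β)}(x)` for arbitrary parameters. -/
noncomputable def jac (α β : ℝ) (n : ℕ) (x : ℝ) : ℝ :=
  ∑ k ∈ Finset.range (n + 1),
    (poch ((n : ℝ) + α + β + 1) k / (Nat.factorial k)) *
      (poch (α + k + 1) (n - k) / (Nat.factorial (n - k))) * ((x - 1) / 2) ^ k

/-- Generalized binomial coefficient `C(x, k)`. -/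
noncomputable def genBinom (x : ℝ) (k : ℕ) : ℝ :=
  (∏ j ∈ Finset.range k, (x - j)) / (Nat.factorial k)

/-- Charlier polynomial `C_n^{(a)}(x)`. -/
noncomputable def charlier (a : ℝ) (n : ℕ) (x : ℝ) : ℝ :=
  ∑ k ∈ Finset.range (n + 1), genBinom x k * (-a) ^ (n - k) / (Nat.factorial (n - k))

lemma poch_zero (a : ℝ) : poch a 0 = 1 := by simp [poch]
lemma poch_succ (a : ℝ) (k : ℕ) : poch a (k+1) = poch a k * (a + k) := by
  simp [poch, ascPochhammer_succ_right]
lemma poch_succ' (a : ℝ) (k : ℕ) : poch a (k+1) = a * poch (a+1) k := by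
  simp [poch, ascPochhammer_succ_left]
lemma poch_pos {a : ℝ} (ha : 0 < a) (k : ℕ) : 0 < poch a k := by
  induction k with
  | zero => simp [poch_zero]
  | succ n ih => rw [poch_succ]; positivity
lemma poch_add (x : ℝ) (m n : ℕ) : poch x (m+n) = poch x m * poch (x+m) n := by
  induction n with
  | zero => simp [poch_zero]
  | succ n ih =>
    rw [← Nat.add_assoc, poch_succ, ih, poch_succ]
    push_cast
    ring
lemma poch_neg (x : ℝ) (p : ℕ) : poch (-(x+p)) p = (-1)^p * poch (x+1) p := by
  induction p with
  | zero => simp [poch_zero]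
  | succ p ih =>
    have h1 : poch (-(x+((p:ℕ)+1:ℕ))) (p+1) = (-(x+((p:ℕ)+1:ℕ))) * poch (-(x+((p:ℕ)+1:ℕ))+1) p :=
      poch_succ' _ _
    have h2 : (-(x+((p:ℕ)+1:ℕ)):ℝ)+1 = -(x+(p:ℕ)) := by push_cast; ring
    rw [h1, h2, ih, poch_succ]
    push_cast
    ring

lemma poch_shift (x : ℝ) (k : ℕ) (hx : x ≠ 0) :
    poch (x+1) k = poch x k * (x + k) / x := by
  have e1 : poch x (k+1) = x * poch (x+1) k := poch_succ' x k
  have e2 : poch x (k+1) = poch x k * (x + k) := poch_succ x k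
  have e3 : x * poch (x+1) k = poch x k * (x + k) := by rw [← e1, e2]
  field_simp
  linarith [e3]

lemma poch_negshift (c : ℝ) (p : ℕ) (hc : c + 1 - p ≠ 0) :
    poch (-(c+1)) p = (c+1) * poch (-c) p / (c+1-p) := by
  have e1 : poch (-(c+1)) (p+1) = (-(c+1)) * poch (-(c+1)+1) p := poch_succ' _ p
  have e2 : poch (-(c+1)) (p+1) = poch (-(c+1)) p * (-(c+1) + p) := poch_succ _ p
  have e3 : (-(c+1) : ℝ) + 1 = -c := by ring
  rw [e3] at e1
  rw [eq_div_iff hc]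
  linear_combination e2 - e1

noncomputable def tm (A D : ℝ) (N p q s : ℕ) : ℝ :=
  (D + q + 2*s) / poch (D + s) (N+p+q+1)
  * (poch (-(D + (N+p+q:ℕ) + s)) p / (Nat.factorial p))
  * (poch (-(A + N)) (N - s) / (Nat.factorial (N - s)))
  * (poch (D + s) q / (Nat.factorial q))
  * (poch (A + 1) s / (Nat.factorial s))

set_option maxHeartbeats 10000000 in
lemma tm_ratio (A D : ℝ) (hD : 0 < D) (N p q s : ℕ) (hs : s < N) :
    tm A D N p q (s+1) * ((2*(s:ℝ)+D+q) * (D+N+q+(s:ℝ)+1) * ((s:ℝ)+1))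
     = tm A D N p q s * (-((2*(s:ℝ)+2+D+q) * ((N:ℝ)-s) * (D+(s:ℝ)+q))) := by
  have hDs : (D:ℝ) + s ≠ 0 := by positivity
  have hq0 : (0:ℝ) ≤ q := Nat.cast_nonneg q
  have hN0 : (0:ℝ) ≤ N := Nat.cast_nonneg N
  have hs0 : (0:ℝ) ≤ s := Nat.cast_nonneg s
  have hp0 : (0:ℝ) ≤ p := Nat.cast_nonneg p
  have hcp : (D + ((N:ℝ)+p+q) + s) + 1 - p ≠ 0 := by
    have : (0:ℝ) < D + N + q + s + 1 := by linarith
    intro hcon; nlinarith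
  have hsub : N - s = (N - (s+1)) + 1 := by omega
  have hcast : (↑(N - (s+1)) : ℝ) = (N:ℝ) - ↑s - 1 := by
    have : ((N - (s+1) : ℕ) : ℝ) = (N:ℝ) - ((s:ℝ)+1) := by
      rw [Nat.cast_sub hs]; push_cast; ring
    rw [this]; ring
  unfold tm
  push_cast
  rw [show D + ((s:ℝ) + 1) = (D + ↑s) + 1 from by ring]
  rw [poch_shift (D + ↑s) (N+p+q+1) hDs, poch_shift (D + ↑s) q hDs]
  rw [show -(D + ((N:ℝ)+↑p+↑q) + (↑s + 1)) = -((D + ((N:ℝ)+↑p+↑q) + ↑s) + 1) from by ring]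
  rw [poch_negshift (D + ((N:ℝ)+↑p+↑q) + ↑s) p hcp]
  rw [hsub, poch_succ (-(A+↑N)) (N - (s+1)), Nat.factorial_succ, poch_succ (A+1) s,
    Nat.factorial_succ]
  push_cast [hcast]
  have hpoch : poch (D + ↑s) (N+p+q+1) ≠ 0 := ne_of_gt (poch_pos (by positivity) _)
  have hfp : (Nat.factorial p : ℝ) ≠ 0 := by positivity
  have hfq : (Nat.factorial q : ℝ) ≠ 0 := by positivity
  have hfs : (Nat.factorial s : ℝ) ≠ 0 := by positivity
  have hfns : (Nat.factorial (N - (s+1)) : ℝ) ≠ 0 := by positivity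
  rw [show ((N:ℝ) - ↑s - 1 + 1) = ((N:ℝ) - ↑s) from by ring]
  have hb : D + ((N:ℝ)+↑p+↑q) + ↑s + 1 ≠ 0 := by positivity
  have hNsne : (N:ℝ) - ↑s ≠ 0 := sub_ne_zero.mpr (by exact_mod_cast Nat.ne_of_gt hs)
  have hs1 : ((s:ℝ) + 1) ≠ 0 := by positivity
  generalize hP1 : poch (D + ↑s) (N+p+q+1) = P1 at hpoch ⊢
  generalize hP2 : poch (-(D + ((N:ℝ) + ↑p + ↑q) + ↑s)) p = P2
  generalize hP3 : poch (-(A + (N:ℝ))) (N-(s+1)) = P3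
  generalize hP4 : poch (D + (s:ℝ)) q = P4
  generalize hP5 : poch (A + 1) s = P5
  generalize hF1 : ((Nat.factorial p : ℕ) : ℝ) = F1 at hfp ⊢
  generalize hF2 : ((Nat.factorial q : ℕ) : ℝ) = F2 at hfq ⊢
  generalize hF3 : ((Nat.factorial s : ℕ) : ℝ) = F3 at hfs ⊢
  generalize hF4 : ((Nat.factorial (N - (s+1)) : ℕ) : ℝ) = F4 at hfns ⊢
  generalize hnn : ((N:ℝ)) = n at hNsne hcp hb ⊢
  generalize hpp : ((p:ℝ)) = pr at hcp hb ⊢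
  generalize hqq : ((q:ℝ)) = qr at hcp hb ⊢
  generalize hss : ((s:ℝ)) = sr at hNsne hcp hDs hs1 hb ⊢
  rw [show D + sr + (n + pr + qr + 1) = D + (n + pr + qr) + sr + 1 from by ring]
  field_simp
  ring

lemma core0 (A D : ℝ) (hD : 0 < D) (p q : ℕ) :
    tm A D 0 p q 0 = (-1:ℝ)^p / (Nat.factorial p * Nat.factorial q) := by
  unfold tm
  norm_num [poch_zero]
  rw [show p + q + 1 = q + (p+1) from by omega, poch_add D q (p+1), poch_succ' (D + (q:ℝ)) p]
  rw [show (-(q:ℝ) + -(p:ℝ) + -D) = -((D + (q:ℝ)) + (p:ℕ)) from by push_cast; ring]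
  rw [poch_neg (D + (q:ℝ)) p]
  have hq : (0:ℝ) < poch D q := poch_pos hD q
  have hp : (0:ℝ) < poch (D + (q:ℝ) + 1) p := poch_pos (by positivity) p
  have hDq : (0:ℝ) < D + q := by positivity
  have hfp : (0:ℝ) < (Nat.factorial p : ℝ) := by positivity
  have hfq : (0:ℝ) < (Nat.factorial q : ℝ) := by positivity
  field_simp

lemma core (A D : ℝ) (hD : 0 < D) (N p q : ℕ) :
    ∑ s ∈ Finset.range (N+1), tm A D N p q s
      = if N = 0 then ((-1:ℝ)^p / (Nat.factorial p * Nat.factorial q)) else 0 := by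
  rcases Nat.eq_zero_or_pos N with hN | hN
  · subst hN
    rw [if_pos rfl, Finset.sum_range_one, core0 A D hD p q]
  · rw [if_neg (Nat.pos_iff_ne_zero.mp hN)]
    set v : ℕ → ℝ := fun s => tm A D N p q s * ((s:ℝ)*((s:ℝ)+D+N+q))/((N:ℝ)*(2*(s:ℝ)+D+q)) with hv
    have hNne : ((N:ℝ)) ≠ 0 := by positivity
    have step : ∀ s ∈ Finset.range N, tm A D N p q s = v s - v (s+1) := by
      intro s hsmem
      have hs : s < N := Finset.mem_range.mp hsmem
      have hd1 : ((2*(s:ℝ)+D+q) * (D+N+q+(s:ℝ)+1) * ((s:ℝ)+1)) ≠ 0 := by positivity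
      have h2 : tm A D N p q (s+1)
          = tm A D N p q s * (-((2*(s:ℝ)+2+D+q) * ((N:ℝ)-s) * (D+(s:ℝ)+q)))
            / ((2*(s:ℝ)+D+q) * (D+N+q+(s:ℝ)+1) * ((s:ℝ)+1)) := by
        rw [eq_div_iff hd1]; exact tm_ratio A D hD N p q s hs
      rw [hv]
      simp only []
      rw [h2]
      push_cast
      have e1 : (0:ℝ) < 2*(s:ℝ)+D+q := by positivity
      have e2 : (0:ℝ) < D+N+q+(s:ℝ)+1 := by positivity
      have e3 : (0:ℝ) < 2*((s:ℝ)+1)+D+q := by positivity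
      field_simp
      ring
    rw [Finset.sum_range_succ, Finset.sum_congr rfl step, Finset.sum_range_sub' v N]
    have hv0 : v 0 = 0 := by simp [hv]
    have hvN : v N = tm A D N p q N := by
      show tm A D N p q N * ((N:ℝ)*((N:ℝ)+D+N+q))/((N:ℝ)*(2*(N:ℝ)+D+q)) = tm A D N p q N
      have h9 : ((N:ℝ)*((N:ℝ)+D+N+q))/((N:ℝ)*(2*(N:ℝ)+D+q)) = 1 := by
        rw [div_eq_one_iff_eq (by positivity)]; ring
      rw [mul_div_assoc, h9, mul_one]
    rw [hv0, hvN]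
    ring

lemma tri (n : ℕ) (f : ℕ → ℕ → ℝ) :
    ∑ t ∈ Finset.range (n+1), ∑ q ∈ Finset.range (t+1), f t q
      = ∑ q ∈ Finset.range (n+1), ∑ s ∈ Finset.range (n-q+1), f (q+s) q := by
  induction n with
  | zero => simp
  | succ n ih =>
    rw [Finset.sum_range_succ, ih, Finset.sum_range_succ (n := n+1)]
    have h1 : ∀ q ∈ Finset.range (n+1),
        ∑ s ∈ Finset.range (n+1-q+1), f (q+s) q
          = (∑ s ∈ Finset.range (n-q+1), f (q+s) q) + f (n+1) q := by
      intro q hq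
      have hq' : q ≤ n := Nat.lt_succ_iff.mp (Finset.mem_range.mp hq)
      rw [show n+1-q+1 = (n-q+1)+1 from by omega, Finset.sum_range_succ]
      congr 2
      omega
    have h2 : ∑ s ∈ Finset.range (n+1-(n+1)+1), f (n+1+s) (n+1) = f (n+1) (n+1) := by
      rw [show n+1-(n+1)+1 = 1 from by omega, Finset.sum_range_one]
    conv_rhs => rw [Finset.sum_range_succ]
    rw [h2, Finset.sum_congr rfl h1, Finset.sum_add_distrib]
    ring

lemma tri2 (K : ℕ) (F : ℕ → ℕ → ℝ) :
    ∑ s ∈ Finset.range (K+1), ∑ p ∈ Finset.range (K-s+1), F s p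
      = ∑ p ∈ Finset.range (K+1), ∑ s ∈ Finset.range (K-p+1), F s p := by
  have hA := tri K (fun t u => F u (t-u))
  have hB := tri K (fun t u => F (t-u) u)
  have hrefl : ∀ t ∈ Finset.range (K+1),
      ∑ u ∈ Finset.range (t+1), F u (t-u) = ∑ u ∈ Finset.range (t+1), F (t-u) u := by
    intro t _
    rw [← Finset.sum_range_reflect (fun u => F (t-u) u) (t+1)]
    apply Finset.sum_congr rfl
    intro u hu
    have : u < t+1 := Finset.mem_range.mp hu
    congr 1 <;> omega
  have hAB := hA.symm.trans ((Finset.sum_congr rfl hrefl).trans hB)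
  -- hAB : ∑ q, ∑ s, F q (q+s-q) = ∑ q, ∑ s, F (q+s-q) q  -- need simplification of args
  have eA : ∑ q ∈ Finset.range (K+1), ∑ s ∈ Finset.range (K-q+1), F q (q+s-q)
      = ∑ s ∈ Finset.range (K+1), ∑ p ∈ Finset.range (K-s+1), F s p := by
    apply Finset.sum_congr rfl; intro q _; apply Finset.sum_congr rfl; intro s _
    congr 1; omega
  have eB : ∑ q ∈ Finset.range (K+1), ∑ s ∈ Finset.range (K-q+1), F (q+s-q) q
      = ∑ p ∈ Finset.range (K+1), ∑ s ∈ Finset.range (K-p+1), F s p := by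
    apply Finset.sum_congr rfl; intro q _; apply Finset.sum_congr rfl; intro s _
    congr 1; omega
  rw [eA, eB] at hAB
  exact hAB


lemma matchlem (a b x : ℝ) (m q p s : ℕ) (hq : q ≤ m) (hp : p ≤ m-q) (hs : s ≤ m-q-p) :
    ((a+b+2*(↑(q+s):ℝ)+1)/poch (a+b+(↑(q+s):ℝ)+1) (m+1) *
      (poch ((↑(m-(q+s)):ℝ) + (-a-(m:ℝ)-1) + (-b-(m:ℝ)-1) + 1) p / (Nat.factorial p) *
        (poch ((-a-(m:ℝ)-1) + (p:ℝ) + 1) ((m-(q+s)) - p) / (Nat.factorial ((m-(q+s)) - p))) *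
        ((x-1)/2)^p)) *
    (poch ((↑(q+s):ℝ) + a + b + 1) q / (Nat.factorial q) *
      (poch (a + (q:ℝ) + 1) ((q+s) - q) / (Nat.factorial ((q+s) - q))) * ((x-1)/2)^q)
    = tm (a+(q:ℝ)) (a+b+(q:ℝ)+1) (m-q-p) p q s * ((x-1)/2)^(p+q) := by
  have hc1 : ((m-q-p : ℕ):ℝ) = (m:ℝ) - q - p := by
    rw [show m-q-p = m-(q+p) from by omega, Nat.cast_sub (by omega)]; push_cast; ring
  have hc2 : ((m-(q+s) : ℕ):ℝ) = (m:ℝ) - q - s := by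
    rw [Nat.cast_sub (by omega)]; push_cast; ring
  have h1 : (q+s) - q = s := by omega
  have h2 : (m-(q+s)) - p = (m-q-p) - s := by omega
  have h3 : m + 1 = (m-q-p) + p + q + 1 := by omega
  rw [h1, h2]
  rw [show poch (a+b+(↑(q+s):ℝ)+1) (m+1) = poch ((a+b+(q:ℝ)+1) + (s:ℝ)) ((m-q-p)+p+q+1) from by
    rw [← h3]; congr 1; push_cast; ring]
  rw [show (a+b+2*(↑(q+s):ℝ)+1) = (a+b+(q:ℝ)+1) + (q:ℝ) + 2*(s:ℝ) from by push_cast; ring]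
  rw [show ((↑(m-(q+s)):ℝ) + (-a-(m:ℝ)-1) + (-b-(m:ℝ)-1) + 1)
      = -((a+b+(q:ℝ)+1) + ((((m-q-p)+p+q : ℕ)):ℝ) + (s:ℝ)) from by
    push_cast [hc1, hc2]; ring]
  rw [show ((-a-(m:ℝ)-1) + (p:ℝ) + 1) = -((a+(q:ℝ)) + (((m-q-p):ℕ):ℝ)) from by
    push_cast [hc1]; ring]
  rw [show ((↑(q+s):ℝ) + a + b + 1) = (a+b+(q:ℝ)+1) + (s:ℝ) from by push_cast; ring]
  rw [show (a + (q:ℝ) + 1) = (a+(q:ℝ)) + 1 from by ring]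
  unfold tm
  rw [pow_add]
  ring

lemma key (a b : ℝ) (hab : 0 < a + b + 1) (m : ℕ) (x : ℝ) :
    ∑ t ∈ Finset.range (m+1),
      (a+b+2*(t:ℝ)+1)/poch (a+b+(t:ℝ)+1) (m+1) * jac (-a-(m:ℝ)-1) (-b-(m:ℝ)-1) (m-t) x * jac a b t x
    = if m = 0 then 1 else 0 := by
  have stepA : ∀ t ∈ Finset.range (m+1),
      (a+b+2*(t:ℝ)+1)/poch (a+b+(t:ℝ)+1) (m+1) * jac (-a-(m:ℝ)-1) (-b-(m:ℝ)-1) (m-t) x * jac a b t x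
      = ∑ q ∈ Finset.range (t+1), ∑ p ∈ Finset.range ((m-t)+1),
          ((a+b+2*(t:ℝ)+1)/poch (a+b+(t:ℝ)+1) (m+1) *
            (poch ((↑(m-t):ℝ) + (-a-(m:ℝ)-1) + (-b-(m:ℝ)-1) + 1) p / (Nat.factorial p) *
              (poch ((-a-(m:ℝ)-1) + (p:ℝ) + 1) ((m-t) - p) / (Nat.factorial ((m-t) - p))) *
              ((x-1)/2)^p)) *
          (poch (((t:ℝ)) + a + b + 1) q / (Nat.factorial q) *
            (poch (a + (q:ℝ) + 1) (t - q) / (Nat.factorial (t - q))) * ((x-1)/2)^q) := by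
    intro t _
    rw [jac, jac, Finset.mul_sum]
    apply Finset.sum_congr rfl
    intro q _
    rw [Finset.mul_sum, Finset.sum_mul]
  rw [Finset.sum_congr rfl stepA]
  rw [tri m]
  have stepC : ∀ q ∈ Finset.range (m+1),
      ∑ s ∈ Finset.range (m-q+1), ∑ p ∈ Finset.range ((m-(q+s))+1),
          ((a+b+2*(↑(q+s):ℝ)+1)/poch (a+b+(↑(q+s):ℝ)+1) (m+1) *
            (poch ((↑(m-(q+s)):ℝ) + (-a-(m:ℝ)-1) + (-b-(m:ℝ)-1) + 1) p / (Nat.factorial p) *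
              (poch ((-a-(m:ℝ)-1) + (p:ℝ) + 1) ((m-(q+s)) - p) / (Nat.factorial ((m-(q+s)) - p))) *
              ((x-1)/2)^p)) *
          (poch ((↑(q+s):ℝ) + a + b + 1) q / (Nat.factorial q) *
            (poch (a + (q:ℝ) + 1) ((q+s) - q) / (Nat.factorial ((q+s) - q))) * ((x-1)/2)^q)
      = ∑ p ∈ Finset.range ((m-q)+1), ∑ s ∈ Finset.range ((m-q)-p+1),
          ((a+b+2*(↑(q+s):ℝ)+1)/poch (a+b+(↑(q+s):ℝ)+1) (m+1) *
            (poch ((↑(m-(q+s)):ℝ) + (-a-(m:ℝ)-1) + (-b-(m:ℝ)-1) + 1) p / (Nat.factorial p) *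
              (poch ((-a-(m:ℝ)-1) + (p:ℝ) + 1) ((m-(q+s)) - p) / (Nat.factorial ((m-(q+s)) - p))) *
              ((x-1)/2)^p)) *
          (poch ((↑(q+s):ℝ) + a + b + 1) q / (Nat.factorial q) *
            (poch (a + (q:ℝ) + 1) ((q+s) - q) / (Nat.factorial ((q+s) - q))) * ((x-1)/2)^q) := by
    intro q _
    have hb : ∀ s, (m-(q+s)) = (m-q)-s := fun s => by omega
    simp only [hb]
    exact tri2 (m-q) _
  rw [Finset.sum_congr rfl stepC]
  have stepD : ∀ q ∈ Finset.range (m+1),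
      (∑ p ∈ Finset.range ((m-q)+1), ∑ s ∈ Finset.range ((m-q)-p+1),
          ((a+b+2*(↑(q+s):ℝ)+1)/poch (a+b+(↑(q+s):ℝ)+1) (m+1) *
            (poch ((↑(m-(q+s)):ℝ) + (-a-(m:ℝ)-1) + (-b-(m:ℝ)-1) + 1) p / (Nat.factorial p) *
              (poch ((-a-(m:ℝ)-1) + (p:ℝ) + 1) ((m-(q+s)) - p) / (Nat.factorial ((m-(q+s)) - p))) *
              ((x-1)/2)^p)) *
          (poch ((↑(q+s):ℝ) + a + b + 1) q / (Nat.factorial q) *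
            (poch (a + (q:ℝ) + 1) ((q+s) - q) / (Nat.factorial ((q+s) - q))) * ((x-1)/2)^q))
      = ∑ p ∈ Finset.range ((m-q)+1),
          (if m-q-p = 0 then ((-1:ℝ)^p / ((Nat.factorial p : ℝ) * (Nat.factorial q : ℝ))) else 0)
            * ((x-1)/2)^(p+q) := by
    intro q hqm
    have hq : q ≤ m := Nat.lt_succ_iff.mp (Finset.mem_range.mp hqm)
    apply Finset.sum_congr rfl
    intro p hpm
    have hp : p ≤ m - q := Nat.lt_succ_iff.mp (Finset.mem_range.mp hpm)
    have hD : (0:ℝ) < a + b + (q:ℝ) + 1 := by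
      have : (0:ℝ) ≤ (q:ℝ) := Nat.cast_nonneg q
      linarith
    have hmatch : ∀ s ∈ Finset.range ((m-q)-p+1),
        ((a+b+2*(↑(q+s):ℝ)+1)/poch (a+b+(↑(q+s):ℝ)+1) (m+1) *
          (poch ((↑(m-(q+s)):ℝ) + (-a-(m:ℝ)-1) + (-b-(m:ℝ)-1) + 1) p / (Nat.factorial p) *
            (poch ((-a-(m:ℝ)-1) + (p:ℝ) + 1) ((m-(q+s)) - p) / (Nat.factorial ((m-(q+s)) - p))) *
            ((x-1)/2)^p)) *
        (poch ((↑(q+s):ℝ) + a + b + 1) q / (Nat.factorial q) *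
          (poch (a + (q:ℝ) + 1) ((q+s) - q) / (Nat.factorial ((q+s) - q))) * ((x-1)/2)^q)
        = tm (a+(q:ℝ)) (a+b+(q:ℝ)+1) (m-q-p) p q s * ((x-1)/2)^(p+q) := by
      intro s hsm
      exact matchlem a b x m q p s hq hp (Nat.lt_succ_iff.mp (Finset.mem_range.mp hsm))
    rw [Finset.sum_congr rfl hmatch, ← Finset.sum_mul, core (a+(q:ℝ)) (a+b+(q:ℝ)+1) hD (m-q-p) p q]
  rw [Finset.sum_congr rfl stepD]
  have stepE : ∀ q ∈ Finset.range (m+1),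
      (∑ p ∈ Finset.range ((m-q)+1),
        (if m-q-p = 0 then ((-1:ℝ)^p / ((Nat.factorial p : ℝ) * (Nat.factorial q : ℝ))) else 0)
          * ((x-1)/2)^(p+q))
      = ((-1:ℝ)^(m-q) / ((Nat.factorial (m-q) : ℝ) * (Nat.factorial q : ℝ))) * ((x-1)/2)^m := by
    intro q hqm
    have hq : q ≤ m := Nat.lt_succ_iff.mp (Finset.mem_range.mp hqm)
    rw [Finset.sum_eq_single_of_mem (m-q) (Finset.mem_range.mpr (by omega))]
    · rw [if_pos (by omega), show (m-q)+q = m from by omega]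
    · intro p hpm hne
      have hp : p ≤ m - q := Nat.lt_succ_iff.mp (Finset.mem_range.mp hpm)
      rw [if_neg (by omega), zero_mul]
  rw [Finset.sum_congr rfl stepE]
  have reflect : ∑ q ∈ Finset.range (m+1),
      ((-1:ℝ)^(m-q) / ((Nat.factorial (m-q) : ℝ) * (Nat.factorial q : ℝ))) * ((x-1)/2)^m
    = ∑ q ∈ Finset.range (m+1),
      ((-1:ℝ)^q / ((Nat.factorial q : ℝ) * (Nat.factorial (m-q) : ℝ))) * ((x-1)/2)^m := by
    rw [← Finset.sum_range_reflect
      (fun q => ((-1:ℝ)^q / ((Nat.factorial q : ℝ) * (Nat.factorial (m-q) : ℝ))) * ((x-1)/2)^m) (m+1)]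
    apply Finset.sum_congr rfl
    intro q hqm
    have hq : q ≤ m := Nat.lt_succ_iff.mp (Finset.mem_range.mp hqm)
    simp only [Nat.add_sub_cancel]
    rw [show m - (m - q) = q from by omega]
  rw [reflect]
  have tochoose : ∀ q ∈ Finset.range (m+1),
      ((-1:ℝ)^q / ((Nat.factorial q : ℝ) * (Nat.factorial (m-q) : ℝ))) * ((x-1)/2)^m
      = ((-1:ℝ)^q * (m.choose q : ℝ)) * ((1/(Nat.factorial m : ℝ)) * ((x-1)/2)^m) := by
    intro q hqm
    have hq : q ≤ m := Nat.lt_succ_iff.mp (Finset.mem_range.mp hqm)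
    have hC : ((m.choose q : ℕ):ℝ) * (Nat.factorial q : ℝ) * (Nat.factorial (m-q) : ℝ)
        = (Nat.factorial m : ℝ) := by
      exact_mod_cast Nat.choose_mul_factorial_mul_factorial hq
    have h1 : (Nat.factorial q : ℝ) ≠ 0 := by positivity
    have h2 : (Nat.factorial (m-q) : ℝ) ≠ 0 := by positivity
    have h3 : (Nat.factorial m : ℝ) ≠ 0 := by positivity
    have hCpos : (0:ℝ) < ((m.choose q : ℕ):ℝ) := by
      exact_mod_cast Nat.choose_pos hq
    rw [← hC]
    field_simp
  rw [Finset.sum_congr rfl tochoose, ← Finset.sum_mul]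
  have halt : (∑ q ∈ Finset.range (m+1), ((-1:ℝ)^q * (m.choose q : ℝ)))
      = if m = 0 then 1 else 0 := by
    have h := Int.alternating_sum_range_choose (n := m)
    have h2 : (∑ q ∈ Finset.range (m+1), ((-1:ℝ)^q * (m.choose q : ℝ)))
        = ((if m = 0 then (1:ℤ) else 0 : ℤ) : ℝ) := by exact_mod_cast h
    rw [h2]
    split_ifs <;> norm_num
  rw [halt]
  split_ifs with hm
  · subst hm; norm_num
  · rw [zero_mul]


theorem stmt4 (α β : ℝ) (h : α + β + 1 > 0) (i j : ℕ) (hij : j ≤ i) (x : ℝ) :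
    ∑ k ∈ Finset.Icc j i,
        (α + β + 2 * k + 1) / poch (α + β + k + j + 1) (i - j + 1) *
          jac (-α - i - 1) (-β - i - 1) (i - k) x * jac (α + j) (β + j) (k - j) x =
      if i = j then 1 else 0 := by
  have hab : (0:ℝ) < (α + (j:ℝ)) + (β + (j:ℝ)) + 1 := by
    have : (0:ℝ) ≤ (j:ℝ) := Nat.cast_nonneg j
    linarith
  rw [show Finset.Icc j i = Finset.Ico j (i+1) from (Finset.Ico_add_one_right_eq_Icc j i).symm,
    Finset.sum_Ico_eq_sum_range, show i+1-j = (i-j)+1 from by omega]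
  have hper : ∀ t ∈ Finset.range ((i-j)+1),
      (α + β + 2 * (↑(j+t):ℝ) + 1) / poch (α + β + (↑(j+t):ℝ) + (j:ℝ) + 1) (i - j + 1) *
          jac (-α - (i:ℝ) - 1) (-β - (i:ℝ) - 1) (i - (j+t)) x * jac (α + (j:ℝ)) (β + (j:ℝ)) ((j+t) - j) x
      = ((α+(j:ℝ))+(β+(j:ℝ))+2*(t:ℝ)+1)/poch ((α+(j:ℝ))+(β+(j:ℝ))+(t:ℝ)+1) ((i-j)+1) *
          jac (-(α+(j:ℝ))-(↑(i-j):ℝ)-1) (-(β+(j:ℝ))-(↑(i-j):ℝ)-1) ((i-j)-t) x *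
          jac (α+(j:ℝ)) (β+(j:ℝ)) t x := by
    intro t ht
    rw [show (α + β + 2 * (↑(j+t):ℝ) + 1) = ((α+(j:ℝ))+(β+(j:ℝ))+2*(t:ℝ)+1) from by push_cast; ring,
      show (α + β + (↑(j+t):ℝ) + (j:ℝ) + 1) = ((α+(j:ℝ))+(β+(j:ℝ))+(t:ℝ)+1) from by push_cast; ring,
      show (-α - (i:ℝ) - 1) = (-(α+(j:ℝ))-(↑(i-j):ℝ)-1) from by rw [Nat.cast_sub hij]; ring,
      show (-β - (i:ℝ) - 1) = (-(β+(j:ℝ))-(↑(i-j):ℝ)-1) from by rw [Nat.cast_sub hij]; ring,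
      show i-(j+t) = (i-j)-t from by omega,
      show (j+t)-j = t from by omega]
  rw [Finset.sum_congr rfl hper, key (α+(j:ℝ)) (β+(j:ℝ)) hab (i-j) x]
  have : i = j ↔ i - j = 0 := by omega
  simp only [this]
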